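/- arXiv:0705.4244 — 3 statements merged into one kernel-verified Lean document; each statement's English description precedes it below -/
import Mathlib

section
/- Let γ ≥ 1, 0 < v₊ < 1, a = v₊^γ(1-v₊)/(1-v₊^γ), and H(v) = v(v - 1 + a(v^{-γ} - 1)). Then for all v with v₊ < v < 1, (v - γ) ≤ H(v)/(v - v₊) ≤ (v - (1 - v₊)). In particular H(v) < 0 for v₊ < v < 1. -/
/-!
Write `H v = v * g v` with `g v = v - 1 + a * (v ^ (-γ) - 1)`. The value of `a` is exactly what
makes `g v₊ = 0`, and `g 1 = 0`; as `g` is strictly convex, it is negative between these zeros.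
For the bounds, `H v / (v - v₊) = v + v₊ - 1 - a + a * s` where `s` is the slope of
`x ↦ x ^ (1 - γ)` on `[v₊, v]`. Since `1 - γ ≤ 0` this power is antitone, so `s ≤ 0`, giving the
upper bound; it is also convex, so `s ≥ (1 - γ) * v₊ ^ (-γ)`, and this gives the lower bound
because `a ≤ v₊`, which in turn comes from `v₊ ^ γ ≤ v₊`.
-/

open Real Set

lemma strictConvexOn_rpow_of_neg {p : ℝ} (hp : p < 0) :
    StrictConvexOn ℝ (Ioi 0) fun x : ℝ ↦ x ^ p := by
  refine StrictMonoOn.strictConvexOn_of_deriv (convex_Ioi 0)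
    (fun x hx ↦ (continuousAt_rpow_const x p (.inl (ne_of_gt hx))).continuousWithinAt) ?_
  rw [interior_Ioi]
  intro x hx y _ hxy
  simp only [Real.deriv_rpow_const]
  exact mul_lt_mul_of_neg_left (rpow_lt_rpow_of_neg hx hxy (by linarith)) hp

lemma convexOn_rpow_of_nonpos {p : ℝ} (hp : p ≤ 0) :
    ConvexOn ℝ (Ioi 0) fun x : ℝ ↦ x ^ p := by
  rcases hp.lt_or_eq with hp | rfl
  · exact (strictConvexOn_rpow_of_neg hp).convexOn
  · simpa only [rpow_zero] using convexOn_const (1 : ℝ) (convex_Ioi (0 : ℝ))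

lemma mul_rpow_sub_one_le_slope_rpow {p x y : ℝ} (hp : p ≤ 0) (hx : 0 < x) (hxy : x < y) :
    p * x ^ (p - 1) ≤ slope (fun x : ℝ ↦ x ^ p) x y :=
  (convexOn_rpow_of_nonpos hp).le_slope_of_hasDerivAt hx (hx.trans hxy) hxy
    (hasDerivAt_rpow_const (.inl (ne_of_gt hx)))

lemma StrictConvexOn.const_mul {E : Type*} [AddCommMonoid E] [Module ℝ E] {s : Set E}
    {f : E → ℝ} {c : ℝ} (hf : StrictConvexOn ℝ s f) (hc : 0 < c) :
    StrictConvexOn ℝ s fun x ↦ c * f x :=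
  ⟨hf.1, fun x hx y hy hxy a b ha hb hab ↦ by
    simpa only [smul_eq_mul, mul_add, mul_left_comm c] using
      mul_lt_mul_of_pos_left (hf.2 hx hy hxy ha hb hab) hc⟩

/-- The factor `g` of `H v = v * g v`. -/
noncomputable def profileFactor (γ a v : ℝ) : ℝ := v - 1 + a * (v ^ (-γ) - 1)

section ProfileFactor

variable {γ a vp v : ℝ}

lemma profileFactor_one : profileFactor γ a 1 = 0 := by
  simp [profileFactor]

lemma strictConvexOn_profileFactor (hγ : 0 < γ) (ha : 0 < a) :
    StrictConvexOn ℝ (Ioi 0) (profileFactor γ a) := by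
  have hsplit : profileFactor γ a = (id + fun _ ↦ -1 - a) + fun v ↦ a * v ^ (-γ) := by
    funext v
    simp only [profileFactor, Pi.add_apply, id]
    ring
  rw [hsplit]
  exact ((convexOn_id (convex_Ioi 0)).add_const (-1 - a)).add_strictConvexOn
    ((strictConvexOn_rpow_of_neg (neg_lt_zero.2 hγ)).const_mul ha)

lemma profileFactor_neg_of_mem_Ioo (hγ : 0 < γ) (ha : 0 < a) (hvp : 0 < vp)
    (hRH : profileFactor γ a vp = 0) (hv : v ∈ Ioo vp 1) : profileFactor γ a v < 0 := by
  have := (strictConvexOn_profileFactor hγ ha).lt_on_openSegment hvp (mem_Ioi.2 one_pos)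
    (ne_of_lt (hv.1.trans hv.2)) (by rwa [openSegment_eq_Ioo (hv.1.trans hv.2)])
  rwa [hRH, profileFactor_one, max_self] at this

lemma mul_profileFactor_div_sub_eq (hvp : 0 < vp) (hv : vp < v)
    (hRH : profileFactor γ a vp = 0) :
    v * profileFactor γ a v / (v - vp) =
      v + vp - 1 - a + a * slope (fun x : ℝ ↦ x ^ (1 - γ)) vp v := by
  have hv0 : 0 < v := hvp.trans hv
  have hsub : v - vp ≠ 0 := sub_ne_zero.2 (ne_of_gt hv)
  have hpow : ∀ x : ℝ, 0 < x → x ^ (1 - γ) = x * x ^ (-γ) := fun x hx ↦ by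
    rw [sub_eq_add_neg, rpow_add hx, rpow_one]
  rw [slope_def_field, hpow v hv0, hpow vp hvp]
  simp only [profileFactor] at hRH ⊢
  field_simp
  linear_combination vp * hRH

lemma profile_quotient_bounds (hγ : 1 ≤ γ) (ha : 0 ≤ a) (hav : a ≤ vp) (hvp : 0 < vp)
    (hv : vp < v) (hRH : profileFactor γ a vp = 0) :
    v - γ ≤ v * profileFactor γ a v / (v - vp) ∧
      v * profileFactor γ a v / (v - vp) ≤ v - (1 - vp) := by
  rw [mul_profileFactor_div_sub_eq hvp hv hRH]
  have hs_le : slope (fun x : ℝ ↦ x ^ (1 - γ)) vp v ≤ 0 := by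
    rw [slope_def_field]
    exact div_nonpos_of_nonpos_of_nonneg
      (sub_nonpos.2 (rpow_le_rpow_of_nonpos hvp hv.le (by linarith))) (by linarith)
  have hs_ge : (1 - γ) * vp ^ (-γ) ≤ slope (fun x : ℝ ↦ x ^ (1 - γ)) vp v := by
    simpa only [sub_sub_cancel_left] using
      mul_rpow_sub_one_le_slope_rpow (by linarith : 1 - γ ≤ 0) hvp hv
  have hRH' : a * vp ^ (-γ) = a + 1 - vp := by
    simp only [profileFactor] at hRH; linarith
  constructor
  · nlinarith [mul_le_mul_of_nonneg_left hs_ge ha]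
  · nlinarith [mul_nonpos_of_nonneg_of_nonpos ha hs_le]

end ProfileFactor

lemma rankineHugoniot_coeff_spec {γ vp a : ℝ} (hγ : 1 ≤ γ) (h0 : 0 < vp) (h1 : vp < 1)
    (ha : a = vp ^ γ * (1 - vp) / (1 - vp ^ γ)) :
    0 < a ∧ a ≤ vp ∧ profileFactor γ a vp = 0 := by
  have hP0 : 0 < vp ^ γ := rpow_pos_of_pos h0 γ
  have hPvp : vp ^ γ ≤ vp := by
    simpa only [rpow_one] using rpow_le_rpow_of_exponent_ge h0 h1.le hγ
  have hP1 : 0 < 1 - vp ^ γ := by linarith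
  refine ⟨ha ▸ div_pos (mul_pos hP0 (by linarith)) hP1, ?_, ?_⟩
  · rw [ha, div_le_iff₀ hP1]
    nlinarith
  · rw [profileFactor, rpow_neg h0.le, ha]
    field_simp
    ring

theorem stmt3 (γ vp : ℝ) (hγ : 1 ≤ γ) (h0 : 0 < vp) (h1 : vp < 1)
    (a : ℝ) (ha : a = vp ^ γ * (1 - vp) / (1 - vp ^ γ))
    (H : ℝ → ℝ) (hH : ∀ v, H v = v * (v - 1 + a * (v ^ (-γ) - 1))) :
    ∀ v, vp < v → v < 1 →
      (v - γ ≤ H v / (v - vp) ∧ H v / (v - vp) ≤ v - (1 - vp)) ∧ H v < 0 := by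
  intro v hvp hv1
  obtain ⟨ha0, hav, hRH⟩ := rankineHugoniot_coeff_spec hγ h0 h1 ha
  have hHv : H v = v * profileFactor γ a v := hH v
  rw [hHv]
  exact ⟨profile_quotient_bounds hγ ha0.le hav h0 hvp hRH,
    mul_neg_of_pos_of_neg (h0.trans hvp)
      (profileFactor_neg_of_mem_Ioo (by linarith) ha0 h0 hRH ⟨hvp, hv1⟩)⟩
end

section
/- Let γ ≥ 1, 0 < v₊ < 1, a = v₊^γ(1-v₊)/(1-v₊^γ), and define g(v) = -v + a(γ-1)v^{-γ} + (a+1) on [v₊, 1]. Then g is nonincreasing on [v₊, 1], and its maximum equals g(v₊) = γ(1-v₊)/(1-v₊^γ) ≤ γ. -/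
theorem stmt4 (γ vp : ℝ) (hγ : 1 ≤ γ) (h0 : 0 < vp) (h1 : vp < 1)
    (a : ℝ) (ha : a = vp ^ γ * (1 - vp) / (1 - vp ^ γ))
    (g : ℝ → ℝ) (hg : ∀ v, g v = -v + a * (γ - 1) * v ^ (-γ) + (a + 1)) :
    AntitoneOn g (Set.Icc vp 1) ∧ (∀ v ∈ Set.Icc vp 1, g v ≤ g vp) ∧
      g vp = γ * (1 - vp) / (1 - vp ^ γ) ∧ g vp ≤ γ := by
  have hγ0 : (0:ℝ) < γ := lt_of_lt_of_le one_pos hγ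
  have hvγ : vp ^ γ < 1 := Real.rpow_lt_one h0.le h1 hγ0
  have hden : 0 < 1 - vp ^ γ := by linarith
  have hvγ0 : 0 < vp ^ γ := Real.rpow_pos_of_pos h0 γ
  have ha0 : 0 ≤ a := by
    rw [ha]
    exact div_nonneg (mul_nonneg hvγ0.le (by linarith)) hden.le
  have hc : 0 ≤ a * (γ - 1) := mul_nonneg ha0 (by linarith)
  have hanti : AntitoneOn g (Set.Icc vp 1) := by
    intro x hx y hy hxy
    rw [hg x, hg y]
    have hx0 : 0 < x := lt_of_lt_of_le h0 hx.1
    have hpow : y ^ (-γ) ≤ x ^ (-γ) :=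
      Real.rpow_le_rpow_of_nonpos hx0 hxy (by linarith)
    nlinarith [mul_le_mul_of_nonneg_left hpow hc]
  have hmem : vp ∈ Set.Icc vp 1 := ⟨le_refl vp, h1.le⟩
  have hval : g vp = γ * (1 - vp) / (1 - vp ^ γ) := by
    rw [hg vp, ha]
    have hinv : vp ^ (-γ) = (vp ^ γ)⁻¹ := Real.rpow_neg h0.le γ
    rw [hinv]
    field_simp
    ring
  refine ⟨hanti, fun v hv => hanti hmem hv hv.1, hval, ?_⟩
  rw [hval]
  have hvv : vp ^ γ ≤ vp := by
    calc vp ^ γ ≤ vp ^ (1:ℝ) := Real.rpow_le_rpow_of_exponent_ge h0 h1.le hγ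
    _ = vp := Real.rpow_one vp
  rw [div_le_iff₀ hden]
  nlinarith
end

section
/- Let v̂ : ℝ → (0,1) solve v̂' = v̂(v̂ - 1) with v̂ → 1 at -∞ and v̂ → 0 at +∞. Suppose λ ∈ ℂ with Re λ ≥ 0 and (v,u) ∈ H¹(ℝ) × H²(ℝ) solve the integrated limiting eigenvalue system λv + v' - u' = 0, λu + u' - ((1-v̂)/v̂) v' = u''/v̂ on ℝ, with (u,u',v,v') → (0,0,0,0) at -∞ and (u',v,v') → (0,0,0), u → c at +∞, and with the energy identity Re λ ∫ (v̂/(1-v̂))|u|² + |v|² dx + ∫ |u'|²/(1-v̂) dx = 0 valid. Then u ≡ 0 and v ≡ 0. -/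
/-!
The Bochner integrals in the energy identity only carry information once the dissipation
`|u'|² / (1 - v̂)` is known to be integrable. Along solutions, the flux
`H = ⟪u, u'⟫ / (1 - v̂) + ⟪u, v⟫ - |v|² / 2` has derivative
`Re λ (v̂/(1 - v̂) |u|² + |v|²) + |u'|² / (1 - v̂) ≥ 0`. So `H` is monotone, tends to `0` at `+∞`,
and is bounded below: otherwise `⟪u, u'⟫ < 0` near `-∞`, i.e. `|u|²` strictly decreases there,
which is impossible as `|u|² → 0` at `-∞`. Hence the dissipation is integrable, the energy
identity forces it to vanish, so `u` is constant, hence `0`; then `v' = -λ v`, and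
`|v(x)| = |v(0)| e^{-Re λ x}` does not decay at `-∞` unless `v ≡ 0`.
-/

open Filter Topology MeasureTheory
open scoped RealInnerProductSpace

theorem integrable_of_hasDerivAt_of_nonneg {H f : ℝ → ℝ} {L M : ℝ}
    (hH : ∀ x, HasDerivAt H (f x) x) (hf : ∀ x, 0 ≤ f x)
    (hL : ∀ x, L ≤ H x) (hM : ∀ x, H x ≤ M) : Integrable f := by
  have hint : ∀ a b, IntervalIntegrable f volume a b := fun a b =>
    intervalIntegral.intervalIntegrable_deriv_of_nonneg
      (continuous_iff_continuousAt.2 fun x => (hH x).continuousAt).continuousOn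
      (fun x _ => hH x) (fun x _ => hf x)
  refine integrable_of_intervalIntegral_norm_bounded (M - L) (fun n : ℕ => (hint (-n) n).1)
    (tendsto_neg_atTop_atBot.comp tendsto_natCast_atTop_atTop) tendsto_natCast_atTop_atTop
    (Eventually.of_forall fun n => ?_)
  simp_rw [Real.norm_of_nonneg (hf _)]
  rw [intervalIntegral.integral_eq_sub_of_hasDerivAt (fun x _ => hH x) (hint _ _)]
  linarith [hL (-n), hM n]

theorem not_eventually_inner_deriv_neg {E : Type*} [NormedAddCommGroup E] [InnerProductSpace ℝ E]
    {u u' : ℝ → E} (hu : ∀ x, HasDerivAt u (u' x) x) (hlim : Tendsto u atBot (𝓝 0)) :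
    ¬ ∀ᶠ x in atBot, ⟪u x, u' x⟫ < 0 := by
  intro hneg
  obtain ⟨A, hA⟩ := eventually_atBot.1 hneg
  have hsq : ∀ x, HasDerivAt (‖u ·‖ ^ 2) (2 * ⟪u x, u' x⟫) x := fun x => (hu x).norm_sq
  have hanti : StrictAntiOn (‖u ·‖ ^ 2) (Set.Iic A) := by
    refine strictAntiOn_of_deriv_neg (convex_Iic A)
      (fun x _ => (hsq x).continuousAt.continuousWithinAt) fun x hx => ?_
    rw [interior_Iic] at hx
    rw [(hsq x).deriv]
    linarith [hA x (le_of_lt hx)]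
  have hle : ‖u (A - 1)‖ ^ 2 ≤ 0 := by
    have hsq_lim : Tendsto (‖u ·‖ ^ 2) atBot (𝓝 0) := by simpa using hlim.norm.pow 2
    refine ge_of_tendsto hsq_lim (eventually_atBot.2 ⟨A - 1, fun y hy => ?_⟩)
    exact hanti.antitoneOn (hy.trans (by linarith)) (by simp) hy
  have hlt := hanti (show A - 1 ∈ Set.Iic A by simp) (show A ∈ Set.Iic A by simp) (by linarith)
  simp only at hlt
  linarith [sq_nonneg ‖u A‖]

theorem eq_zero_of_hasDerivAt_eq_neg_mul {v : ℝ → ℂ} {lam : ℂ} (hlam : 0 ≤ lam.re)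
    (hv : ∀ x, HasDerivAt v (-lam * v x) x) (hlim : Tendsto v atBot (𝓝 0)) (x : ℝ) :
    v x = 0 := by
  have hg : ∀ y, HasDerivAt (fun y : ℝ => Complex.exp (lam * y) * v y) 0 y := by
    intro y
    have hexp : HasDerivAt (fun y : ℝ => Complex.exp (lam * y)) (Complex.exp (lam * y) * lam) y :=
      (((Complex.ofRealCLM.hasDerivAt (x := y)).const_mul lam).cexp).congr_deriv (by simp)
    exact (hexp.mul (hv y)).congr_deriv (by ring)
  have hconst :=
    is_const_of_deriv_eq_zero (fun y => (hg y).differentiableAt) fun y => (hg y).deriv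
  have hbound : ∀ y ≤ (0 : ℝ), ‖Complex.exp (lam * x) * v x‖ ≤ ‖v y‖ := by
    intro y hy
    rw [hconst x y, norm_mul, Complex.norm_exp]
    have : Real.exp (lam * y).re ≤ 1 := by
      simpa [Complex.mul_re] using mul_nonpos_of_nonneg_of_nonpos hlam hy
    exact mul_le_of_le_one_left (norm_nonneg _) this
  have hzero : ‖Complex.exp (lam * x) * v x‖ ≤ 0 :=
    ge_of_tendsto (by simpa using hlim.norm) (eventually_atBot.2 ⟨0, hbound⟩)
  simpa [Complex.exp_ne_zero] using norm_le_zero_iff.1 hzero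

noncomputable def energyFlux (vhat : ℝ → ℝ) (u v : ℝ → ℂ) (x : ℝ) : ℝ :=
  ⟪u x, deriv u x⟫ / (1 - vhat x) + ⟪u x, v x⟫ - ‖v x‖ ^ 2 / 2

section
variable {vhat : ℝ → ℝ} {u v : ℝ → ℂ} {lam : ℂ} {x : ℝ}

theorem hasDerivAt_energyFlux (hvhat : vhat x ∈ Set.Ioo (0 : ℝ) 1)
    (hode : HasDerivAt vhat (vhat x * (vhat x - 1)) x)
    (hu : HasDerivAt u (deriv u x) x) (hu' : HasDerivAt (deriv u) (deriv (deriv u) x) x)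
    (hv : HasDerivAt v (deriv v x) x)
    (heq1 : lam * v x + deriv v x - deriv u x = 0)
    (heq2 : lam * u x + deriv u x - (((1 - vhat x) / vhat x : ℝ) : ℂ) * deriv v x
      = deriv (deriv u) x / ((vhat x : ℝ) : ℂ)) :
    HasDerivAt (energyFlux vhat u v)
      (lam.re * (vhat x / (1 - vhat x) * ‖u x‖ ^ 2 + ‖v x‖ ^ 2)
        + ‖deriv u x‖ ^ 2 / (1 - vhat x)) x := by
  have hne : 1 - vhat x ≠ 0 := by linarith [hvhat.2]
  have h1 : deriv v x = deriv u x - lam * v x := by linear_combination heq1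
  have h2 : deriv (deriv u) x
      = vhat x * (lam * u x + deriv u x) - (1 - vhat x) * deriv v x := by
    have hne0 : ((vhat x : ℝ) : ℂ) ≠ 0 := Complex.ofReal_ne_zero.2 hvhat.1.ne'
    rw [eq_div_iff hne0] at heq2
    push_cast at heq2
    field_simp at heq2
    linear_combination -heq2
  -- The term `⟪u, u'⟫ v̂' / (1 - v̂)²` coming from the weight cancels against the `v̂ ⟪u, u'⟫`
  -- part of `u''`: this is where the profile equation `v̂' = v̂ (v̂ - 1)` enters.
  have := (((hu.inner ℝ hu').div ((hasDerivAt_const x 1).sub hode) hne).add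
    (hu.inner ℝ hv)).sub ((hv.norm_sq).div_const 2)
  refine this.congr_deriv ?_
  simp only [Pi.sub_apply, Complex.inner, h2, h1, Complex.sq_norm, Complex.normSq_apply,
    Complex.mul_re, Complex.mul_im, Complex.add_re, Complex.add_im, Complex.sub_re,
    Complex.sub_im, Complex.ofReal_re, Complex.ofReal_im, Complex.conj_re, Complex.conj_im,
    Complex.one_re, Complex.one_im]
  field_simp
  ring

theorem tendsto_energyFlux_atTop {a : ℝ} {c : ℂ} (ha : a ≠ 1) (hvhat : Tendsto vhat atTop (𝓝 a))
    (hu : Tendsto u atTop (𝓝 c)) (hu' : Tendsto (deriv u) atTop (𝓝 0))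
    (hv : Tendsto v atTop (𝓝 0)) :
    Tendsto (energyFlux vhat u v) atTop (𝓝 0) := by
  have := (((hu.inner hu').div (tendsto_const_nhds.sub hvhat) (sub_ne_zero.2 ha.symm)).add
    (hu.inner hv)).sub ((hv.norm.pow 2).div_const 2)
  rwa [inner_zero_right, zero_div, norm_zero, add_zero, zero_pow two_ne_zero, zero_div,
    sub_zero] at this

theorem bddBelow_range_energyFlux (hmono : Monotone (energyFlux vhat u v))
    (hvhat : ∀ x, vhat x < 1) (hu : Differentiable ℝ u)
    (hum : Tendsto u atBot (𝓝 0)) (hvm : Tendsto v atBot (𝓝 0)) :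
    BddBelow (Set.range (energyFlux vhat u v)) := by
  by_contra hunb
  have hbot : Tendsto (energyFlux vhat u v) atBot atBot :=
    hmono.tendsto_atBot_atBot fun b => by
      obtain ⟨_, ⟨x, rfl⟩, hx⟩ := not_bddBelow_iff.1 hunb b
      exact ⟨x, hx.le⟩
  have hrest : Tendsto (fun x => -(⟪u x, v x⟫ - ‖v x‖ ^ 2 / 2)) atBot (𝓝 0) := by
    simpa using ((hum.inner hvm).sub ((hvm.norm.pow 2).div_const 2)).neg
  have hfirst : Tendsto (fun x => ⟪u x, deriv u x⟫ / (1 - vhat x)) atBot atBot :=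
    (hbot.atBot_add hrest).congr fun x => by simp only [energyFlux]; ring
  refine not_eventually_inner_deriv_neg (fun x => (hu x).hasDerivAt) hum ?_
  filter_upwards [hfirst.eventually_lt_atBot 0] with x hx
  have := hvhat x
  exact ((div_neg_iff.1 hx).resolve_left fun h => by linarith [h.2]).1

theorem integrable_dissipation (hrange : ∀ x, vhat x ∈ Set.Ioo (0 : ℝ) 1)
    (hode : ∀ x, HasDerivAt vhat (vhat x * (vhat x - 1)) x) (hvtop : Tendsto vhat atTop (𝓝 0))
    (hlam : 0 ≤ lam.re) (hv : Differentiable ℝ v) (hu : Differentiable ℝ u)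
    (hu' : Differentiable ℝ (deriv u))
    (heq1 : ∀ x, lam * v x + deriv v x - deriv u x = 0)
    (heq2 : ∀ x, lam * u x + deriv u x - (((1 - vhat x) / vhat x : ℝ) : ℂ) * deriv v x
      = deriv (deriv u) x / ((vhat x : ℝ) : ℂ))
    (hum : Tendsto u atBot (𝓝 0)) (hvm : Tendsto v atBot (𝓝 0)) {c : ℂ}
    (hup : Tendsto u atTop (𝓝 c)) (hu'p : Tendsto (deriv u) atTop (𝓝 0))
    (hvp : Tendsto v atTop (𝓝 0)) :
    Integrable fun x => ‖deriv u x‖ ^ 2 / (1 - vhat x) := by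
  set G : ℝ → ℝ := fun x => vhat x / (1 - vhat x) * ‖u x‖ ^ 2 + ‖v x‖ ^ 2
  set F : ℝ → ℝ := fun x => ‖deriv u x‖ ^ 2 / (1 - vhat x)
  have hweight : ∀ x, 0 < 1 - vhat x := fun x => sub_pos.2 (hrange x).2
  have hG : ∀ x, 0 ≤ lam.re * G x := fun x => by
    have := (hrange x).1; have := hweight x; positivity
  have hF : ∀ x, 0 ≤ F x := fun x => by have := hweight x; positivity
  have hflux : ∀ x, HasDerivAt (energyFlux vhat u v) (lam.re * G x + F x) x := fun x =>
    hasDerivAt_energyFlux (hrange x) (hode x) (hu x).hasDerivAt (hu' x).hasDerivAt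
      (hv x).hasDerivAt (heq1 x) (heq2 x)
  have hmono : Monotone (energyFlux vhat u v) :=
    monotone_of_deriv_nonneg (fun x => (hflux x).differentiableAt) fun x =>
      (hflux x).deriv ▸ add_nonneg (hG x) (hF x)
  obtain ⟨L, hL⟩ := bddBelow_range_energyFlux hmono (fun x => (hrange x).2) hu hum hvm
  have hDint : Integrable fun x => lam.re * G x + F x :=
    integrable_of_hasDerivAt_of_nonneg hflux (fun x => add_nonneg (hG x) (hF x))
      (fun x => hL ⟨x, rfl⟩) fun x =>
        hmono.ge_of_tendsto (tendsto_energyFlux_atTop zero_ne_one hvtop hup hu'p hvp) x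
  have hvhat_cont : Continuous vhat :=
    continuous_iff_continuousAt.2 fun x => (hode x).continuousAt
  have hFcont : Continuous F :=
    (hu'.continuous.norm.pow 2).div (continuous_const.sub hvhat_cont) fun x => (hweight x).ne'
  refine hDint.mono' hFcont.aestronglyMeasurable (Eventually.of_forall fun x => ?_)
  rw [Real.norm_of_nonneg (hF x)]
  exact le_add_of_nonneg_left (hG x)

end

theorem stmt19_general (vhat : ℝ → ℝ) (hrange : ∀ x, vhat x ∈ Set.Ioo (0:ℝ) 1)
    (hode : ∀ x, HasDerivAt vhat (vhat x * (vhat x - 1)) x)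
    (hvtop : Tendsto vhat atTop (𝓝 0))
    (lam : ℂ) (hlam : 0 ≤ lam.re) (v u : ℝ → ℂ) (c : ℂ)
    (hv : Differentiable ℝ v) (hu : Differentiable ℝ u)
    (hu' : Differentiable ℝ (deriv u))
    (heq1 : ∀ x, lam * v x + deriv v x - deriv u x = 0)
    (heq2 : ∀ x, lam * u x + deriv u x
      - (((1 - vhat x) / vhat x : ℝ) : ℂ) * deriv v x = deriv (deriv u) x / ((vhat x : ℝ) : ℂ))
    (hum : Tendsto u atBot (𝓝 0))
    (hvm : Tendsto v atBot (𝓝 0))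
    (hup : Tendsto u atTop (𝓝 c)) (hu'p : Tendsto (deriv u) atTop (𝓝 0))
    (hvp : Tendsto v atTop (𝓝 0))
    (henergy : lam.re * (∫ x : ℝ, ((vhat x / (1 - vhat x)) * ‖u x‖ ^ 2 + ‖v x‖ ^ 2)) +
      (∫ x : ℝ, ‖deriv u x‖ ^ 2 / (1 - vhat x)) = 0) :
    (∀ x, u x = 0) ∧ ∀ x, v x = 0 := by
  have hweight : ∀ x, 0 < 1 - vhat x := fun x => sub_pos.2 (hrange x).2
  set F : ℝ → ℝ := fun x => ‖deriv u x‖ ^ 2 / (1 - vhat x)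
  have hF : 0 ≤ F := fun x => by have := hweight x; positivity
  have hFint : Integrable F := integrable_dissipation hrange hode hvtop hlam hv hu hu' heq1 heq2
    hum hvm hup hu'p hvp
  have hFzero : ∫ x, F x = 0 := by
    have hG : 0 ≤ ∫ x, vhat x / (1 - vhat x) * ‖u x‖ ^ 2 + ‖v x‖ ^ 2 :=
      integral_nonneg fun x => by have := (hrange x).1; have := hweight x; positivity
    have hFpos : 0 ≤ ∫ x, F x := integral_nonneg hF
    nlinarith [mul_nonneg hlam hG]
  have hu'0 : ∀ x, deriv u x = 0 := congrFun <|
    (hu'.continuous.ae_eq_iff_eq volume (continuous_const (y := 0))).1 <|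
      ((integral_eq_zero_iff_of_nonneg hF hFint).1 hFzero).mono fun x hx => by
        simpa [F, (hweight x).ne'] using hx
  have hu0 : ∀ x, u x = 0 := fun x =>
    tendsto_nhds_unique (tendsto_const_nhds.congr fun y =>
      is_const_of_deriv_eq_zero hu hu'0 x y) hum
  refine ⟨hu0, eq_zero_of_hasDerivAt_eq_neg_mul hlam (fun x => ?_) hvm⟩
  exact (hv x).hasDerivAt.congr_deriv (by linear_combination heq1 x + hu'0 x)

theorem stmt19 (vhat : ℝ → ℝ) (hrange : ∀ x, vhat x ∈ Set.Ioo (0:ℝ) 1)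
    (hode : ∀ x, HasDerivAt vhat (vhat x * (vhat x - 1)) x)
    (hvbot : Tendsto vhat atBot (𝓝 1)) (hvtop : Tendsto vhat atTop (𝓝 0))
    (lam : ℂ) (hlam : 0 ≤ lam.re) (v u : ℝ → ℂ) (c : ℂ)
    (hv : Differentiable ℝ v) (hu : Differentiable ℝ u)
    (hu' : Differentiable ℝ (deriv u))
    (heq1 : ∀ x, lam * v x + deriv v x - deriv u x = 0)
    (heq2 : ∀ x, lam * u x + deriv u x
      - (((1 - vhat x) / vhat x : ℝ) : ℂ) * deriv v x = deriv (deriv u) x / ((vhat x : ℝ) : ℂ))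
    (hum : Tendsto u atBot (𝓝 0)) (hu'm : Tendsto (deriv u) atBot (𝓝 0))
    (hvm : Tendsto v atBot (𝓝 0)) (hv'm : Tendsto (deriv v) atBot (𝓝 0))
    (hup : Tendsto u atTop (𝓝 c)) (hu'p : Tendsto (deriv u) atTop (𝓝 0))
    (hvp : Tendsto v atTop (𝓝 0)) (hv'p : Tendsto (deriv v) atTop (𝓝 0))
    (henergy : lam.re * (∫ x : ℝ, ((vhat x / (1 - vhat x)) * ‖u x‖ ^ 2 + ‖v x‖ ^ 2)) +
      (∫ x : ℝ, ‖deriv u x‖ ^ 2 / (1 - vhat x)) = 0) :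
    (∀ x, u x = 0) ∧ ∀ x, v x = 0 :=
  stmt19_general vhat hrange hode hvtop lam hlam v u c hv hu hu' heq1 heq2 hum hvm hup hu'p hvp
    henergy
end
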